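/- arXiv:1608.01488 — 2 statements merged into one kernel-verified Lean document; each statement's English description precedes it below -/
import Mathlib

section
/- Let G be a connected planar graph on n ≥ 5 vertices and let r ∈ V(G) be a vertex of degree at most 2. Then sn₂(G, r) = n − 1, i.e., two firefighters can save all vertices except r itself. -/
/-!
Protect the at most two neighbours of `r` in the first round: the fire can then never leave
`r`, so every other vertex is saved, and no strategy can do better since `r` always burns.
-/

/-- The set of vertices on fire after `t` fire-spread rounds, when the fire breaks out
at `v` and the firefighters protect the vertices of `P s` in round `s + 1` (protection
happens just before the `s`-th spread step and is permanent). -/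
def burnedSet {V : Type*} (G : SimpleGraph V) (v : V) (P : ℕ → Set V) : ℕ → Set V
  | 0 => {v}
  | t + 1 => burnedSet G v P t ∪
      {w | (∃ u ∈ burnedSet G v P t, G.Adj u w) ∧ ∀ s ≤ t, w ∉ P s}

/-- A strategy `P` is valid for the per-round budgets `b` if in each round it protects
at most `b t` vertices, none of which are already on fire. -/
def ValidStrategy {V : Type*} (G : SimpleGraph V) (b : ℕ → ℕ) (v : V) (P : ℕ → Set V) : Prop :=
  ∀ t, (P t).Finite ∧ (P t).ncard ≤ b t ∧ Disjoint (P t) (burnedSet G v P t)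

/-- `sn G b v` is the maximum number of vertices that can be saved (i.e. that never
catch fire) when the fire breaks out at `v` and the firefighters may protect at most
`b t` vertices in round `t + 1`. -/
noncomputable def sn {V : Type*} (G : SimpleGraph V) (b : ℕ → ℕ) (v : V) : ℕ :=
  sSup {m | ∃ P, ValidStrategy G b v P ∧
    m = Nat.card {w : V | ∀ t, w ∉ burnedSet G v P t}}

/-- The surviving rate of `G` with per-round budgets `b` : the expected fraction of
vertices that can be saved when the starting vertex is chosen uniformly at random. -/
noncomputable def survivingRate {V : Type*} [Fintype V] (G : SimpleGraph V) (b : ℕ → ℕ) : ℝ :=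
  (∑ v : V, (sn G b v : ℝ)) / (Fintype.card V : ℝ) ^ 2

/-- A plane embedding of a simple graph: vertices are points of the plane and edges are
simple arcs between their endpoints, such that arcs avoid all other vertices and two
arcs of distinct edges meet only in common endpoints. -/
structure PlaneEmbedding {V : Type*} (G : SimpleGraph V) where
  pos : V → ℝ × ℝ
  arc : V → V → ℝ → ℝ × ℝ
  pos_inj : Function.Injective pos
  arc_cont : ∀ ⦃u v⦄, G.Adj u v → Continuous (arc u v)
  arc_injOn : ∀ ⦃u v⦄, G.Adj u v → Set.InjOn (arc u v) (Set.Icc 0 1)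
  arc_zero : ∀ ⦃u v⦄, G.Adj u v → arc u v 0 = pos u
  arc_one : ∀ ⦃u v⦄, G.Adj u v → arc u v 1 = pos v
  arc_symm : ∀ ⦃u v⦄, G.Adj u v → ∀ t, arc v u t = arc u v (1 - t)
  arc_avoid : ∀ ⦃u v⦄, G.Adj u v → ∀ w : V, pos w ∉ arc u v '' Set.Ioo 0 1
  arc_meet : ∀ ⦃u v x y⦄, G.Adj u v → G.Adj x y → s(u, v) ≠ s(x, y) →
      arc u v '' Set.Icc 0 1 ∩ arc x y '' Set.Icc 0 1 ⊆
        ({pos u, pos v} : Set (ℝ × ℝ)) ∩ {pos x, pos y}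

/-- A graph is planar if it admits a plane embedding. -/
def IsPlanar {V : Type*} (G : SimpleGraph V) : Prop :=
  Nonempty (PlaneEmbedding G)

namespace SimpleGraph

variable {V : Type*} (G : SimpleGraph V)

def protectNeighbors (v : V) : ℕ → Set V :=
  fun t => if t = 0 then G.neighborSet v else ∅

theorem burnedSet_eq_singleton_of_neighborSet_subset {v : V} {P : ℕ → Set V}
    (hP : G.neighborSet v ⊆ P 0) (t : ℕ) : burnedSet G v P t = {v} := by
  induction t with
  | zero => rfl
  | succ t ih =>
    refine (congrArg (· ∪ _) ih).trans (Set.union_eq_self_of_subset_right ?_)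
    rintro w ⟨⟨u, hu, hadj⟩, hunprotected⟩
    rw [ih, Set.mem_singleton_iff] at hu
    subst hu
    exact absurd (hP hadj) (hunprotected 0 t.zero_le)

theorem burnedSet_protectNeighbors (v : V) (t : ℕ) :
    burnedSet G v (G.protectNeighbors v) t = {v} :=
  G.burnedSet_eq_singleton_of_neighborSet_subset (by simp [protectNeighbors]) t

theorem validStrategy_protectNeighbors {b : ℕ → ℕ} {v : V} [Fintype (G.neighborSet v)]
    (hv : G.degree v ≤ b 0) : ValidStrategy G b v (G.protectNeighbors v) := by
  intro t
  rw [burnedSet_protectNeighbors]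
  rcases t.eq_zero_or_pos with rfl | ht
  · refine ⟨Set.toFinite (G.neighborSet v), ?_, ?_⟩
    · simpa [protectNeighbors, ← card_neighborSet_eq_degree, ← Set.ncard_eq_toFinset_card'] using hv
    · simp [protectNeighbors]
  · simp [protectNeighbors, ht.ne']

theorem saved_subset_compl_singleton (v : V) (P : ℕ → Set V) :
    {w | ∀ t, w ∉ burnedSet G v P t} ⊆ {v}ᶜ :=
  fun _ hw hwv => hw 0 hwv

theorem saved_protectNeighbors (v : V) :
    {w | ∀ t, w ∉ burnedSet G v (G.protectNeighbors v) t} = {v}ᶜ := by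
  simp only [burnedSet_protectNeighbors]
  ext w
  simp

variable [Finite V]

theorem sn_le_card_sub_one (b : ℕ → ℕ) (v : V) : sn G b v ≤ Nat.card V - 1 := by
  refine csSup_le' ?_
  rintro m ⟨P, -, rfl⟩
  calc Nat.card {w | ∀ t, w ∉ burnedSet G v P t}
      ≤ ({v}ᶜ : Set V).ncard := Set.ncard_le_ncard (G.saved_subset_compl_singleton v P)
    _ = Nat.card V - 1 := by rw [Set.ncard_compl, Set.ncard_singleton]

theorem card_saved_le_sn {b : ℕ → ℕ} {v : V} {P : ℕ → Set V} (hP : ValidStrategy G b v P) :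
    Nat.card {w | ∀ t, w ∉ burnedSet G v P t} ≤ sn G b v :=
  le_csSup ⟨Nat.card V, fun _ ⟨_, _, hm⟩ => hm ▸ Finite.card_subtype_le _⟩ ⟨P, hP, rfl⟩

theorem sn_eq_card_sub_one_of_degree_le {b : ℕ → ℕ} {v : V} [Fintype (G.neighborSet v)]
    (hv : G.degree v ≤ b 0) : sn G b v = Nat.card V - 1 := by
  refine (G.sn_le_card_sub_one b v).antisymm ?_
  have hsaved := G.card_saved_le_sn (G.validStrategy_protectNeighbors hv)
  rwa [saved_protectNeighbors, Nat.card_coe_set_eq, Set.ncard_compl, Set.ncard_singleton]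
    at hsaved

end SimpleGraph

theorem sn_two_of_degree_le_two_general {V : Type} [Fintype V] (G : SimpleGraph V)
    [DecidableRel G.Adj] (r : V) (hr : G.degree r ≤ 2) :
    sn G (fun _ => 2) r = Fintype.card V - 1 := by
  rw [G.sn_eq_card_sub_one_of_degree_le hr, Nat.card_eq_fintype_card]

/-- Observation 3.1 (first case): if the fire starts at a vertex of degree at most 2 in
a connected planar graph on `n ≥ 5` vertices, two firefighters can save all the
remaining `n - 1` vertices. -/
theorem sn_two_of_degree_le_two {V : Type} [Fintype V] (G : SimpleGraph V)
    [DecidableRel G.Adj] (hconn : G.Connected) (hplanar : IsPlanar G)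
    (hn : 5 ≤ Fintype.card V) (r : V) (hr : G.degree r ≤ 2) :
    sn G (fun _ => 2) r = Fintype.card V - 1 :=
  sn_two_of_degree_le_two_general G r hr
end

section
/- Let G be a finite simple graph whose vertex set is partitioned into four sets X, Y, Z, W such that: every vertex of X has degree at least 1; every vertex of Y has degree at least 3; every vertex of Z has degree at least 4; and every vertex of W either has degree at least 5, or has degree exactly 4 and at least 2 neighbours of degree at least 6. Then Σ_{v ∈ V(G)} deg(v) ≥ |X| + 3|Y| + 4|Z| + (9/2)|W|. -/
/-!
Discharging: every vertex starts with charge equal to its degree, and every vertex of degree at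
least 6 sends `1/4` to each neighbour that is a degree-4 vertex of `W`. This moves charge along
edges, so the total is still the degree sum. A sender keeps at least `(3/4) d ≥ 9/2`, every other
vertex keeps at least its degree, and a degree-4 vertex of `W` gains at least `2 · 1/4`. Hence
every vertex ends with charge at least `min (deg v) (9/2)`, and each vertex of `W` with at least
`9/2`.
-/

open Finset

namespace SimpleGraph

variable {V : Type*} [Fintype V] [DecidableEq V] (G : SimpleGraph V) [DecidableRel G.Adj]

noncomputable def dischargedCharge (S T : Finset V) (v : V) : ℝ :=
  G.degree v - (if v ∈ S then (#{w ∈ T | G.Adj v w} : ℝ) else 0) / 4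
    + (if v ∈ T then (#{u ∈ S | G.Adj u v} : ℝ) else 0) / 4

theorem sum_dischargedCharge (S T : Finset V) :
    ∑ v, G.dischargedCharge S T v = ∑ v, (G.degree v : ℝ) := by
  have sent_eq_received :
      ∑ v ∈ S, (#{w ∈ T | G.Adj v w} : ℝ) = ∑ w ∈ T, (#{u ∈ S | G.Adj u w} : ℝ) := by
    exact_mod_cast sum_card_bipartiteAbove_eq_sum_card_bipartiteBelow G.Adj
  simp only [dischargedCharge, sum_add_distrib, sum_sub_distrib, ← sum_div, sum_ite_mem,
    univ_inter, sent_eq_received, sub_add_cancel]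

variable {G}

theorem min_degree_le_dischargedCharge (T : Finset V) (v : V) :
    min (G.degree v : ℝ) (9 / 2) ≤ G.dischargedCharge {v | 6 ≤ G.degree v} T v := by
  have hsent : (#{w ∈ T | G.Adj v w} : ℝ) ≤ G.degree v := by
    rw [← card_neighborFinset_eq_degree]
    exact_mod_cast card_le_card fun w hw => by simp_all
  have hreceived :
      (0 : ℝ) ≤ if v ∈ T then (#{u ∈ {v | 6 ≤ G.degree v} | G.Adj u v} : ℝ) else 0 := by
    split_ifs <;> positivity
  have := min_le_left (G.degree v : ℝ) (9 / 2)
  have := min_le_right (G.degree v : ℝ) (9 / 2)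
  unfold dischargedCharge
  by_cases hS : 6 ≤ G.degree v
  · have h6 : (6 : ℝ) ≤ G.degree v := by exact_mod_cast hS
    rw [if_pos (by simpa using hS)]
    linarith
  · rw [if_neg (by simpa using hS)]
    linarith

theorem nine_halves_le_dischargedCharge {T : Finset V} {v : V} (hvT : v ∈ T)
    (h4 : G.degree v = 4) (h2 : 2 ≤ #{w ∈ G.neighborFinset v | 6 ≤ G.degree w}) :
    9 / 2 ≤ G.dischargedCharge {v | 6 ≤ G.degree v} T v := by
  have hreceived : ({u ∈ {v | 6 ≤ G.degree v} | G.Adj u v} : Finset V) =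
      {w ∈ G.neighborFinset v | 6 ≤ G.degree w} := by
    ext; simp [adj_comm, and_comm]
  have h2' : (2 : ℝ) ≤ #{w ∈ G.neighborFinset v | 6 ≤ G.degree w} := by exact_mod_cast h2
  rw [dischargedCharge, if_neg (by simp [h4]), if_pos hvT, hreceived, h4]
  linarith

end SimpleGraph

theorem degree_sum_lower_bound_general {V : Type} [Fintype V] [DecidableEq V]
    (G : SimpleGraph V) [DecidableRel G.Adj]
    (X Y Z W : Finset V)
    (hXY : Disjoint X Y) (hXZ : Disjoint X Z) (hXW : Disjoint X W)
    (hYZ : Disjoint Y Z) (hYW : Disjoint Y W) (hZW : Disjoint Z W)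
    (hX : ∀ v ∈ X, 1 ≤ G.degree v)
    (hY : ∀ v ∈ Y, 3 ≤ G.degree v)
    (hZ : ∀ v ∈ Z, 4 ≤ G.degree v)
    (hW : ∀ v ∈ W, 5 ≤ G.degree v ∨
      (G.degree v = 4 ∧ 2 ≤ ((G.neighborFinset v).filter fun w => 6 ≤ G.degree w).card)) :
    (∑ v : V, (G.degree v : ℝ)) ≥
      (X.card : ℝ) + 3 * Y.card + 4 * Z.card + 9 / 2 * W.card := by
  set charge := G.dischargedCharge {v | 6 ≤ G.degree v} {v ∈ W | G.degree v = 4}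
  have le_charge {a : ℝ} {k : ℕ} (ha : a ≤ 9 / 2) (hak : a ≤ k) {v : V} (hk : k ≤ G.degree v) :
      a ≤ charge v :=
    (le_min (hak.trans (by exact_mod_cast hk)) ha).trans
      (SimpleGraph.min_degree_le_dischargedCharge _ v)
  have mul_card_le_sum {s : Finset V} {a : ℝ} (h : ∀ v ∈ s, a ≤ charge v) :
      a * #s ≤ ∑ v ∈ s, charge v := by
    simpa [mul_comm] using card_nsmul_le_sum s charge a h
  have le_charge_of_mem_W (v : V) (hv : v ∈ W) : 9 / 2 ≤ charge v := by
    obtain h5 | ⟨h4, h2⟩ := hW v hv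
    · exact le_charge le_rfl (by norm_num) h5
    · exact SimpleGraph.nine_halves_le_dischargedCharge (by simp [hv, h4]) h4 h2
  calc (X.card : ℝ) + 3 * Y.card + 4 * Z.card + 9 / 2 * W.card
      ≤ ∑ v ∈ X, charge v + ∑ v ∈ Y, charge v + ∑ v ∈ Z, charge v + ∑ v ∈ W, charge v := by
        gcongr
        · simpa using mul_card_le_sum fun v hv => le_charge (by norm_num) le_rfl (hX v hv)
        · exact mul_card_le_sum fun v hv => le_charge (by norm_num) le_rfl (hY v hv)
        · exact mul_card_le_sum fun v hv => le_charge (by norm_num) le_rfl (hZ v hv)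
        · exact mul_card_le_sum le_charge_of_mem_W
    _ = ∑ v ∈ X ∪ Y ∪ Z ∪ W, charge v := by
        rw [sum_union (disjoint_union_left.2 ⟨disjoint_union_left.2 ⟨hXW, hYW⟩, hZW⟩),
          sum_union (disjoint_union_left.2 ⟨hXZ, hYZ⟩), sum_union hXY]
    _ ≤ ∑ v, charge v := sum_le_univ_sum_of_nonneg fun v =>
        (le_min (Nat.cast_nonneg _) (by norm_num)).trans
          (SimpleGraph.min_degree_le_dischargedCharge _ v)
    _ = ∑ v, (G.degree v : ℝ) := G.sum_dischargedCharge _ _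

/-- Inequality (2) of the paper: if the vertex set of a finite simple graph is
partitioned into `X`, `Y`, `Z`, `W` where vertices of `X`, `Y`, `Z` have degree at
least 1, 3, 4 respectively, and every vertex of `W` has degree at least 5 or has degree
exactly 4 with at least two neighbours of degree at least 6, then
`∑ deg(v) ≥ |X| + 3|Y| + 4|Z| + (9/2)|W|`. -/
theorem degree_sum_lower_bound {V : Type} [Fintype V] [DecidableEq V]
    (G : SimpleGraph V) [DecidableRel G.Adj]
    (X Y Z W : Finset V)
    (hXY : Disjoint X Y) (hXZ : Disjoint X Z) (hXW : Disjoint X W)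
    (hYZ : Disjoint Y Z) (hYW : Disjoint Y W) (hZW : Disjoint Z W)
    (hcover : X ∪ Y ∪ Z ∪ W = Finset.univ)
    (hX : ∀ v ∈ X, 1 ≤ G.degree v)
    (hY : ∀ v ∈ Y, 3 ≤ G.degree v)
    (hZ : ∀ v ∈ Z, 4 ≤ G.degree v)
    (hW : ∀ v ∈ W, 5 ≤ G.degree v ∨
      (G.degree v = 4 ∧ 2 ≤ ((G.neighborFinset v).filter fun w => 6 ≤ G.degree w).card)) :
    (∑ v : V, (G.degree v : ℝ)) ≥
      (X.card : ℝ) + 3 * Y.card + 4 * Z.card + 9 / 2 * W.card :=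
  degree_sum_lower_bound_general G X Y Z W hXY hXZ hXW hYZ hYW hZW hX hY hZ hW
end
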